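/- For n ≥ 4, the inner arc complex of a non-orientable crown with n boundary vertices is not a cone: no c-arc class is disjoint from every other c-arc class. -/

import Mathlib

open Finset

attribute [local instance] Classical.propDecidable

noncomputable section

universe u v

/-- A finite abstract simplicial complex: a finite collection of nonempty finite sets
closed under taking nonempty subsets. -/
def IsComplex {V : Type u} (X : Finset (Finset V)) : Prop :=
  (∀ s ∈ X, s.Nonempty) ∧ ∀ s ∈ X, ∀ t : Finset V, t ⊆ s → t.Nonempty → t ∈ X

/-- `s` is a maximal simplex (facet) of `X`. -/
def IsFacet {V : Type u} (X : Finset (Finset V)) (s : Finset V) : Prop :=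
  s ∈ X ∧ ∀ t ∈ X, s ⊆ t → t = s

/-- An elementary collapse: `σ` is a free face of `X` whose unique maximal coface is `τ`,
and `Y` results from removing all simplices containing `σ`. -/
def ElemCollapse {V : Type u} (X Y : Finset (Finset V)) : Prop :=
  ∃ σ τ : Finset V, σ ∈ X ∧ IsFacet X τ ∧ σ ⊂ τ ∧
    (∀ t ∈ X, σ ⊆ t → t ⊆ τ) ∧ Y = X.filter (fun s => ¬ σ ⊆ s)

/-- `X` simplicially collapses onto `Y`. -/
def Collapses {V : Type u} (X Y : Finset (Finset V)) : Prop :=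
  Relation.ReflTransGen ElemCollapse X Y

/-- `X` is collapsible: it collapses to a single vertex. -/
def Collapsible {V : Type u} (X : Finset (Finset V)) : Prop :=
  ∃ v : V, Collapses X {{v}}

/-- The vertex `v` is dominated by the vertex `w ≠ v`: every facet containing `v`
contains `w`. -/
def Dominated {V : Type u} (X : Finset (Finset V)) (v w : V) : Prop :=
  w ≠ v ∧ ∀ s : Finset V, IsFacet X s → v ∈ s → w ∈ s

/-- An elementary strong collapse: deletion of a dominated vertex. -/
def ElemStrongCollapse {V : Type u} (X Y : Finset (Finset V)) : Prop :=
  ∃ v w : V, {v} ∈ X ∧ Dominated X v w ∧ Y = X.filter (fun s => v ∉ s)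

/-- `X` strongly collapses onto `Y`. -/
def StrongCollapses {V : Type u} (X Y : Finset (Finset V)) : Prop :=
  Relation.ReflTransGen ElemStrongCollapse X Y

/-- `X` is strongly collapsible: it strongly collapses to a single vertex. -/
def StrongCollapsible {V : Type u} (X : Finset (Finset V)) : Prop :=
  ∃ v : V, StrongCollapses X {{v}}

/-- The set of vertices of a complex. -/
def vertexSet {V : Type u} (X : Finset (Finset V)) : Finset V := X.sup id

/-- The link of a simplex `σ` in `X`. -/
def linkC {V : Type u} (X : Finset (Finset V)) (σ : Finset V) : Finset (Finset V) :=
  X.filter (fun η => Disjoint η σ ∧ η ∪ σ ∈ X)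

/-- The face-deletion of `σ` in `X`. -/
def faceDeletion {V : Type u} (X : Finset (Finset V)) (σ : Finset V) : Finset (Finset V) :=
  X.filter (fun η => ¬ σ ⊆ η)

/-- The simplicial join of two complexes (on disjoint vertex sets, via `Sum`). -/
def joinC {A : Type u} {B : Type v} (X : Finset (Finset A)) (Y : Finset (Finset B)) :
    Finset (Finset (A ⊕ B)) :=
  (((insert (∅ : Finset A) X) ×ˢ (insert (∅ : Finset B) Y)).image
      (fun p => p.1.image Sum.inl ∪ p.2.image Sum.inr)).filter (·.Nonempty)

/-- The flag (clique) complex on the admissible vertices (those satisfying `P`) of a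
finite type, with respect to a (reflexive, symmetric) compatibility relation `R`:
simplices are the nonempty finite sets of admissible vertices that are pairwise
compatible. -/
def cliqueComplex {A : Type u} [Fintype A] (P : A → Prop) (R : A → A → Prop) :
    Finset (Finset A) :=
  Finset.univ.filter (fun s : Finset A =>
    s.Nonempty ∧ (∀ a ∈ s, P a) ∧ ∀ a ∈ s, ∀ b ∈ s, R a b)

/-- A complex is a cone if some vertex lies in every maximal simplex. -/
def IsCone {A : Type u} (X : Finset (Finset A)) : Prop :=
  ∃ v : A, {v} ∈ X ∧ ∀ s, IsFacet X s → v ∈ s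

/-- Simplicial isomorphism (onto): `Y` is the image of `X` under an injection of
vertices. -/
def Isom {A : Type u} {B : Type v} (X : Finset (Finset A)) (Y : Finset (Finset B)) : Prop :=
  ∃ f : A → B, Function.Injective f ∧ Y = X.image (fun s => s.image f)

/-! ### A combinatorial model of the arc complex of a non-orientable crown `M(n)`
(a Möbius strip with `n` marked boundary vertices, labelled by `Fin n` in cyclic
order). -/

/-- `k` lies in the closed cyclic interval from `i` to `j` (counterclockwise); by
convention the interval is the full circle when `i = j`. -/
def btwn {n : ℕ} (i j k : Fin n) : Prop :=
  if i = j then True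
  else if i.val ≤ j.val then i.val ≤ k.val ∧ k.val ≤ j.val
  else i.val ≤ k.val ∨ k.val ≤ j.val

/-- `k` lies strictly inside the cyclic interval from `i` to `j`. -/
def sbtwn {n : ℕ} (i j k : Fin n) : Prop := btwn i j k ∧ k ≠ i ∧ k ≠ j

/-- Disjointness (compatibility) of two boundary arcs (b-arcs), each encoded by the
ordered pair `(i, j)` of its endpoints, the polygonal side being the cyclic interval
`[i..j]` (the pair `(i, i)` encodes the maximal b-arc `M i`, whose polygonal side is
the whole circle): the polygonal sides must be nested (with no endpoint of the outer
arc strictly inside the inner interval) or have disjoint interiors. -/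
def bbDisj {n : ℕ} (p q : Fin n × Fin n) : Prop :=
  p = q ∨
  ((∀ k, btwn p.1 p.2 k → btwn q.1 q.2 k) ∧ ¬ sbtwn p.1 p.2 q.1 ∧ ¬ sbtwn p.1 p.2 q.2) ∨
  ((∀ k, btwn q.1 q.2 k → btwn p.1 p.2 k) ∧ ¬ sbtwn q.1 q.2 p.1 ∧ ¬ sbtwn q.1 q.2 p.2) ∨
  ((∀ k, ¬ (sbtwn p.1 p.2 k ∧ btwn q.1 q.2 k)) ∧ ∀ k, ¬ (btwn p.1 p.2 k ∧ sbtwn q.1 q.2 k))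

/-- Disjointness of two c-arcs of the Möbius crown.  A c-arc is encoded by the pair
`(i, j)` of its endpoints with `i ≤ j` (so `(i, i)` is the maximal c-arc `L i`).
Cutting along the c-arc `(p₁, p₂)` produces a strip whose two sides carry the closed
intervals `[p₁..p₂]` and its closed complement; a c-arc `(q₁, q₂)` is disjoint from it
iff one of its endpoints lies in the first closed interval and the other in the
second. -/
def cDisjMob {n : ℕ} (p q : Fin n × Fin n) : Prop :=
  p = q ∨
  (p.1 ≤ q.1 ∧ q.1 ≤ p.2 ∧ (q.2 ≤ p.1 ∨ p.2 ≤ q.2)) ∨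
  (p.1 ≤ q.2 ∧ q.2 ≤ p.2 ∧ (q.1 ≤ p.1 ∨ p.2 ≤ q.1))

/-- Arcs of the non-orientable crown `M(n)`: `Sum.inl (i, j)` (with `i ≤ j`) is the
c-arc joining `i` and `j` (the maximal c-arc `L i` when `i = j`); `Sum.inr (i, j)` is
the b-arc with endpoints `i, j` whose polygonal side is the cyclic interval `[i..j]`
(the maximal b-arc `M i` when `i = j`). -/
abbrev MobArc (n : ℕ) := (Fin n × Fin n) ⊕ (Fin n × Fin n)

/-- Disjointness (compatibility, up to homotopy) of arcs of the non-orientable crown: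
a c-arc is disjoint from a b-arc iff neither of its endpoints lies strictly inside the
polygonal side of the b-arc. -/
def mobDisj {n : ℕ} : MobArc n → MobArc n → Prop
  | Sum.inl p, Sum.inl q => cDisjMob p q
  | Sum.inl p, Sum.inr q => ¬ sbtwn q.1 q.2 p.1 ∧ ¬ sbtwn q.1 q.2 p.2
  | Sum.inr q, Sum.inl p => ¬ sbtwn q.1 q.2 p.1 ∧ ¬ sbtwn q.1 q.2 p.2
  | Sum.inr p, Sum.inr q => bbDisj p q

/-- Validity: c-arcs are encoded with `i ≤ j`; the maximal b-arcs `M i` are nontrivial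
only when `n ≥ 2`. -/
def mobValid {n : ℕ} : MobArc n → Prop
  | Sum.inl p => p.1 ≤ p.2
  | Sum.inr p => p.1 ≠ p.2 ∨ 2 ≤ n

/-- The full arc complex of the non-orientable crown `M(n)`. -/
def mobComplex (n : ℕ) : Finset (Finset (MobArc n)) :=
  cliqueComplex mobValid mobDisj

/-- The inner arc complex of `M(n)`, the subcomplex spanned by the c-arcs. -/
def innerMobComplex (n : ℕ) : Finset (Finset (MobArc n)) :=
  (mobComplex n).filter (fun s => ∀ a ∈ s, a.isLeft = true)

/-- The inner arc complex of `M(n)`, directly as a flag complex on c-arcs. -/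
def innerMob (n : ℕ) : Finset (Finset (Fin n × Fin n)) :=
  cliqueComplex (fun p => p.1 ≤ p.2) cDisjMob

/-! The maximal c-arc `L e` crosses every c-arc with no endpoint at `e`. Once `n ≥ 3` every
c-arc misses some vertex, so no c-arc is disjoint from all others, and in a flag complex a
cone vertex would have to be. -/

lemma IsFacet.of_maximal {V : Type u} {X : Finset (Finset V)} {s : Finset V}
    (hs : Maximal (· ∈ X) s) : IsFacet X s :=
  ⟨hs.1, fun _ ht hst => hs.eq_of_ge ht hst⟩

lemma exists_isFacet_superset {V : Type u} {X : Finset (Finset V)} {s : Finset V}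
    (hs : s ∈ X) : ∃ t, IsFacet X t ∧ s ⊆ t :=
  let ⟨t, hst, ht⟩ := X.exists_le_maximal hs
  ⟨t, .of_maximal ht, hst⟩

lemma singleton_mem_cliqueComplex {A : Type u} [Fintype A] {P : A → Prop}
    {R : A → A → Prop} {a : A} (hP : P a) (hR : R a a) : {a} ∈ cliqueComplex P R := by
  simp only [cliqueComplex, mem_filter, mem_univ, singleton_nonempty, mem_singleton,
    forall_eq, true_and]
  exact ⟨hP, hR⟩

lemma IsCone.exists_forall_rel_of_cliqueComplex {A : Type u} [Fintype A] {P : A → Prop}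
    {R : A → A → Prop} (hrefl : ∀ a, P a → R a a) (hX : IsCone (cliqueComplex P R)) :
    ∃ v, P v ∧ ∀ a, P a → R v a := by
  obtain ⟨v, hv, hcone⟩ := hX
  have hvalid : ∀ s ∈ cliqueComplex P R, (∀ a ∈ s, P a) ∧ ∀ a ∈ s, ∀ b ∈ s, R a b :=
    fun s hs => (mem_filter.1 hs).2.2
  refine ⟨v, (hvalid _ hv).1 v (mem_singleton_self v), fun a ha => ?_⟩
  obtain ⟨t, ht, hat⟩ :=
    exists_isFacet_superset (singleton_mem_cliqueComplex ha (hrefl a ha))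
  exact (hvalid t ht.1).2 v (hcone t ht) a (hat (mem_singleton_self a))

lemma not_cDisjMob_diag {n : ℕ} {p : Fin n × Fin n} {e : Fin n} (h₁ : e ≠ p.1)
    (h₂ : e ≠ p.2) : ¬ cDisjMob p (e, e) := by
  rintro (h | ⟨hle, hge, h | h⟩ | ⟨hle, hge, h | h⟩)
  · exact h₁ (congrArg Prod.fst h).symm
  all_goals first
    | exact h₁ (le_antisymm h hle)
    | exact h₂ (le_antisymm hge h)

lemma exists_ne_ne_of_two_lt {n : ℕ} (hn : 2 < n) (a b : Fin n) : ∃ e, e ≠ a ∧ e ≠ b := by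
  have hcard : #{a, b} < #(univ : Finset (Fin n)) := by
    rw [card_univ, Fintype.card_fin]
    exact card_le_two.trans_lt hn
  obtain ⟨e, -, he⟩ := exists_mem_notMem_of_card_lt_card hcard
  simp only [mem_insert, mem_singleton, not_or] at he
  exact ⟨e, he⟩

lemma exists_not_cDisjMob {n : ℕ} (hn : 2 < n) (p : Fin n × Fin n) :
    ∃ q : Fin n × Fin n, q.1 ≤ q.2 ∧ ¬ cDisjMob p q :=
  let ⟨e, h₁, h₂⟩ := exists_ne_ne_of_two_lt hn p.1 p.2
  ⟨(e, e), le_rfl, not_cDisjMob_diag h₁ h₂⟩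

/-- For `n ≥ 4`, the inner arc complex of the non-orientable crown
`M(n)` is not a cone: no c-arc class is disjoint from every other c-arc class. -/
theorem stmt13 (n : ℕ) (hn : 4 ≤ n) :
    ¬ IsCone (innerMob n) ∧
    ¬ ∃ p : Fin n × Fin n, p.1 ≤ p.2 ∧
        ∀ q : Fin n × Fin n, q.1 ≤ q.2 → cDisjMob p q := by
  have hn' : 2 < n := by omega
  have no_universal : ¬ ∃ p : Fin n × Fin n, p.1 ≤ p.2 ∧
      ∀ q : Fin n × Fin n, q.1 ≤ q.2 → cDisjMob p q := by
    rintro ⟨p, -, hp⟩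
    obtain ⟨q, hq, hpq⟩ := exists_not_cDisjMob hn' p
    exact hpq (hp q hq)
  exact ⟨fun hcone => no_universal
    (hcone.exists_forall_rel_of_cliqueComplex fun _ _ => Or.inl rfl), no_universal⟩
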